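/- Let μ : F^× → ℂ^× be an unramified character (trivial on O_F^×), let χ(a b; 0 d) = μ(a/d) on the Borel B, let a = μ(ϖ)/√q where q is the residue cardinality, and let f : GL₂(F) → ℂ be the function satisfying f(bk) = χ(b)|a_b/d_b|^{1/2} for b ∈ B, k ∈ GL₂(O_F) (the spherical vector of Ind_B^G χ). Then for k = (x y; z t) ∈ GL₂(O_F) and i ∈ ℕ: f(kγ⁻ⁱ) = aⁱ if val(z/t) ≤ 0 (including t = 0), f(kγ⁻ⁱ) = a^{i−2·val(z/t)} if 1 ≤ val(z/t) ≤ i−1, and f(kγ⁻ⁱ) = a^{−i} if val(z/t) ≥ i. -/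

import Mathlib

/-!
Write `g = kγ⁻ⁱ = (x ϖ⁻ⁱ, y; z ϖ⁻ⁱ, t)` with determinant `Δ`. Whichever entry `c`, `d` of the bottom
row of `g = (a, b; c, d)` divides the other in `O`, `g` has an explicit Iwasawa decomposition:
`g = (Δ/d, b; 0, d) (1, 0; c/d, 1)` or `g = (-Δ/c, a; 0, c) (0, 1; 1, d/c)`, so `f g` is `χδ^{1/2}`
evaluated at `Δ/d²` or `-Δ/c²`. In each case this ratio is a unit times `ϖⁿ` with `n = i`,
`i - 2m` or `-i`, and `χδ^{1/2}` sends `unit · ϖⁿ` to `(μ(ϖ)/√q)ⁿ = aⁿ`.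
-/

open Matrix

noncomputable section

/-- `x ∈ F` is a unit of the ring of integers `O`. -/
def UnitO {F : Type*} [Field F] (O : ValuationSubring F) (x : F) : Prop :=
  x ∈ O ∧ ∃ u ∈ O, x * u = 1

/-- `GL₂(O_F)` viewed as a set of matrices over `F`. -/
def Kset {F : Type*} [Field F] (O : ValuationSubring F) : Set (Matrix (Fin 2) (Fin 2) F) :=
  {g | (∀ i j, g i j ∈ O) ∧ ∃ u ∈ O, g.det * u = 1}

/-- The upper triangular Borel subgroup `B ⊂ GL₂(F)`, as a set of matrices. -/
def Bset (F : Type*) [Field F] : Set (Matrix (Fin 2) (Fin 2) F) :=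
  {g | g 1 0 = 0 ∧ g.det ≠ 0}

theorem Real.sqrt_zpow {x : ℝ} (hx : 0 < x) (n : ℤ) : √(x ^ n) = √x ^ n := by
  rw [← Real.rpow_intCast x n, Real.sqrt_eq_rpow, Real.sqrt_eq_rpow,
    ← Real.rpow_intCast (x ^ ((1 : ℝ) / 2)) n, ← Real.rpow_mul hx.le, ← Real.rpow_mul hx.le,
    mul_comm]

theorem map_zpow_of_map_mul {G₀ M : Type*} [GroupWithZero G₀] [DivisionMonoid M] {μ : G₀ → M}
    (h1 : μ 1 = 1) (hmul : ∀ x y, x ≠ 0 → y ≠ 0 → μ (x * y) = μ x * μ y)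
    {x : G₀} (hx : x ≠ 0) (n : ℤ) : μ (x ^ n) = μ x ^ n := by
  let μ' : G₀ˣ →* M :=
    { toFun := fun u => μ u
      map_one' := h1
      map_mul' := fun u w => hmul u w u.ne_zero w.ne_zero }
  simpa [μ'] using μ'.map_zpow (Units.mk0 x hx) n

section

variable {F : Type*} [Field F] {O : ValuationSubring F} {ϖ : F}

theorem unitO_one : UnitO O (1 : F) := ⟨one_mem O, 1, one_mem O, mul_one 1⟩

namespace UnitO

variable {x y : F}

theorem ne_zero (hx : UnitO O x) : x ≠ 0 := by
  rintro rfl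
  simpa using hx.2

theorem inv_mem (hx : UnitO O x) : x⁻¹ ∈ O := by
  obtain ⟨u, hu, hxu⟩ := hx.2
  rwa [← eq_inv_of_mul_eq_one_right hxu]

theorem mul (hx : UnitO O x) (hy : UnitO O y) : UnitO O (x * y) :=
  ⟨mul_mem hx.1 hy.1, x⁻¹ * y⁻¹, mul_mem hx.inv_mem hy.inv_mem, by
    field_simp [hx.ne_zero, hy.ne_zero]⟩

theorem inv (hx : UnitO O x) : UnitO O x⁻¹ :=
  ⟨hx.inv_mem, x, hx.1, inv_mul_cancel₀ hx.ne_zero⟩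

theorem neg (hx : UnitO O x) : UnitO O (-x) := by
  obtain ⟨u, hu, hxu⟩ := hx.2
  exact ⟨neg_mem hx.1, -u, neg_mem hu, by rw [neg_mul_neg, hxu]⟩

end UnitO

theorem mem_Kset_iff {a b c d : F} :
    !![a, b; c, d] ∈ Kset O ↔ a ∈ O ∧ b ∈ O ∧ c ∈ O ∧ d ∈ O ∧ UnitO O (a * d - b * c) := by
  simp only [Kset, Set.mem_ofPred_eq, Fin.forall_fin_two, det_fin_two_of, of_apply, cons_val',
    cons_val_zero, cons_val_one, empty_val', cons_val_fin_one, UnitO]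
  constructor
  · rintro ⟨⟨⟨ha, hb⟩, hc, hd⟩, hdet⟩
    exact ⟨ha, hb, hc, hd, sub_mem (mul_mem ha hd) (mul_mem hb hc), hdet⟩
  · rintro ⟨ha, hb, hc, hd, -, hdet⟩
    exact ⟨⟨⟨ha, hb⟩, hc, hd⟩, hdet⟩

theorem fin_two_mul_diag (x y z t s : F) :
    !![x, y; z, t] * !![s, 0; 0, 1] = !![x * s, y; z * s, t] := by
  simp

theorem mul_sqrt_abv_unit_mul_zpow {q : ℝ} (hq : 0 < q) {v : AbsoluteValue F ℝ}
    (hvϖ : v ϖ = 1 / q) (hvu : ∀ x : F, UnitO O x → v x = 1) {μ : F → ℂ}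
    (hμ : ∀ x y : F, x ≠ 0 → y ≠ 0 → μ (x * y) = μ x * μ y)
    (hμu : ∀ x : F, UnitO O x → μ x = 1) (hϖ0 : ϖ ≠ 0) {w : F} (hw : UnitO O w) (n : ℤ) :
    μ (w * ϖ ^ n) * (Real.sqrt (v (w * ϖ ^ n)) : ℂ) = (μ ϖ / Real.sqrt q) ^ n := by
  have hμ_val : μ (w * ϖ ^ n) = μ ϖ ^ n := by
    rw [hμ w _ hw.ne_zero (zpow_ne_zero n hϖ0), hμu w hw, one_mul,
      map_zpow_of_map_mul (hμu 1 unitO_one) hμ hϖ0]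
  have hv_val : v (w * ϖ ^ n) = (q ^ n)⁻¹ := by
    rw [_root_.map_mul, hvu w hw, one_mul, map_zpow₀, hvϖ, one_div, _root_.inv_zpow]
  rw [hμ_val, hv_val, Real.sqrt_inv, Real.sqrt_zpow hq, div_zpow, div_eq_mul_inv]
  push_cast
  rfl

theorem det_mul_diag_ne_zero {x y z t s : F} (hdet : x * t - y * z ≠ 0) (hs : s ≠ 0) :
    x * s * t - y * (z * s) ≠ 0 := by
  rw [show x * s * t - y * (z * s) = (x * t - y * z) * s by ring]
  exact mul_ne_zero hdet hs

variable {X : Type*} {φ : F → X} {f : Matrix (Fin 2) (Fin 2) F → X}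

theorem apply_eq_of_lower_left_div_lower_right_mem
    (hf : ∀ b ∈ Bset F, ∀ k ∈ Kset O, f (b * k) = φ (b 0 0 / b 1 1))
    {a b c d : F} (hdet : a * d - b * c ≠ 0) (hd : d ≠ 0) (hc : c / d ∈ O) :
    f !![a, b; c, d] = φ ((a * d - b * c) / d ^ 2) := by
  have hB : !![(a * d - b * c) / d, b; 0, d] ∈ Bset F :=
    ⟨rfl, by simp [det_fin_two_of, hdet, hd]⟩
  have hK : !![1, 0; c / d, 1] ∈ Kset O :=
    mem_Kset_iff.2 ⟨one_mem O, zero_mem O, hc, one_mem O, by simpa using unitO_one⟩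
  have hBK : !![(a * d - b * c) / d, b; 0, d] * !![1, 0; c / d, 1] = !![a, b; c, d] := by
    ext i j
    fin_cases i <;> fin_cases j <;> simp [field]
  rw [← hBK, hf _ hB _ hK]
  simp [div_div, sq]

theorem apply_eq_of_lower_right_div_lower_left_mem
    (hf : ∀ b ∈ Bset F, ∀ k ∈ Kset O, f (b * k) = φ (b 0 0 / b 1 1))
    {a b c d : F} (hdet : a * d - b * c ≠ 0) (hc : c ≠ 0) (hd : d / c ∈ O) :
    f !![a, b; c, d] = φ (-(a * d - b * c) / c ^ 2) := by
  have hB : !![-(a * d - b * c) / c, a; 0, c] ∈ Bset F :=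
    ⟨rfl, by simpa [det_fin_two_of, hc] using neg_ne_zero.2 hdet⟩
  have hK : !![0, 1; 1, d / c] ∈ Kset O :=
    mem_Kset_iff.2 ⟨zero_mem O, one_mem O, one_mem O, hd, by simpa using unitO_one.neg⟩
  have hBK : !![-(a * d - b * c) / c, a; 0, c] * !![0, 1; 1, d / c] = !![a, b; c, d] := by
    ext i j
    fin_cases i <;> fin_cases j <;> simp [field]
  rw [← hBK, hf _ hB _ hK]
  simp [div_div, sq]

theorem exists_unit_apply_mul_diag_eq_of_lower_left_eq_pow_mul_unit
    (hf : ∀ b ∈ Bset F, ∀ k ∈ Kset O, f (b * k) = φ (b 0 0 / b 1 1))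
    (hϖ : ϖ ∈ O) (hϖ0 : ϖ ≠ 0) {x y z t : F} (hk : !![x, y; z, t] ∈ Kset O)
    {i m : ℕ} (hmi : m ≤ i) {u : F} (hu : UnitO O u) (hz : z = ϖ ^ m * u) :
    ∃ w, UnitO O w ∧
      f (!![x, y; z, t] * !![(ϖ ^ i)⁻¹, 0; 0, 1]) = φ (w * ϖ ^ ((i : ℤ) - 2 * m)) := by
  obtain ⟨-, -, -, ht, hdet⟩ := mem_Kset_iff.1 hk
  obtain ⟨n, rfl⟩ := Nat.exists_eq_add_of_le hmi
  have hu0 := hu.ne_zero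
  refine ⟨-(x * t - y * z) * (u⁻¹ * u⁻¹), hdet.neg.mul (hu.inv.mul hu.inv), ?_⟩
  rw [fin_two_mul_diag, apply_eq_of_lower_right_div_lower_left_mem hf
    (det_mul_diag_ne_zero hdet.ne_zero (by simp [hϖ0]))]
  · subst hz
    congr 1
    rw [show ((m + n : ℕ) : ℤ) - 2 * m = n - m by push_cast; ring, zpow_sub₀ hϖ0]
    simp only [zpow_natCast]
    field_simp
    ring
  · subst hz
    simp [hϖ0, hu0]
  · rw [hz, show t / (ϖ ^ m * u * (ϖ ^ (m + n))⁻¹) = t * u⁻¹ * ϖ ^ n by field_simp; ring]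
    exact mul_mem (mul_mem ht hu.inv_mem) (pow_mem hϖ n)

theorem exists_unit_apply_mul_diag_eq_of_pow_dvd_lower_left
    (hf : ∀ b ∈ Bset F, ∀ k ∈ Kset O, f (b * k) = φ (b 0 0 / b 1 1))
    (hϖ0 : ϖ ≠ 0) {x y z t : F} (hk : !![x, y; z, t] ∈ Kset O) (ht : UnitO O t)
    {i : ℕ} {r : F} (hr : r ∈ O) (hz : z = ϖ ^ i * r) :
    ∃ w, UnitO O w ∧
      f (!![x, y; z, t] * !![(ϖ ^ i)⁻¹, 0; 0, 1]) = φ (w * ϖ ^ (-(i : ℤ))) := by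
  obtain ⟨-, -, -, -, hdet⟩ := mem_Kset_iff.1 hk
  have ht0 := ht.ne_zero
  refine ⟨(x * t - y * z) * (t⁻¹ * t⁻¹), hdet.mul (ht.inv.mul ht.inv), ?_⟩
  rw [fin_two_mul_diag, apply_eq_of_lower_left_div_lower_right_mem hf
    (det_mul_diag_ne_zero hdet.ne_zero (by simp [hϖ0])) ht0]
  · congr 1
    rw [_root_.zpow_neg, zpow_natCast]
    field_simp
  · rw [hz, show ϖ ^ i * r * (ϖ ^ i)⁻¹ / t = r * t⁻¹ by field_simp]
    exact mul_mem hr ht.inv_mem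

end

theorem statement8_general {F : Type*} [Field F] (O : ValuationSubring F) (ϖ : F) (hϖ : ϖ ∈ O)
    (q : ℕ) (hq : 1 < q)
    (v : AbsoluteValue F ℝ) (hvϖ : v ϖ = 1 / q) (hvu : ∀ x : F, UnitO O x → v x = 1)
    (μ : F → ℂ)
    (hμ : ∀ x y : F, x ≠ 0 → y ≠ 0 → μ (x * y) = μ x * μ y)
    (hμu : ∀ x : F, UnitO O x → μ x = 1)
    (f : Matrix (Fin 2) (Fin 2) F → ℂ)
    (hf : ∀ b ∈ Bset F, ∀ k ∈ Kset O,
      f (b * k) = μ (b 0 0 / b 1 1) * (Real.sqrt (v (b 0 0 / b 1 1)) : ℂ))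
    (a : ℂ) (ha : a = μ ϖ / (Real.sqrt q : ℂ))
    (x y z t : F) (hk : !![x, y; z, t] ∈ Kset O) (i : ℕ) :
    (UnitO O z → f (!![x, y; z, t] * !![(ϖ ^ i)⁻¹, 0; 0, 1]) = a ^ i) ∧
    (∀ m : ℕ, 1 ≤ m → m ≤ i - 1 → (∃ u : F, UnitO O u ∧ z = ϖ ^ m * u) → UnitO O t →
      f (!![x, y; z, t] * !![(ϖ ^ i)⁻¹, 0; 0, 1]) = a ^ ((i : ℤ) - 2 * m)) ∧
    ((∃ r ∈ O, z = ϖ ^ i * r) → UnitO O t →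
      f (!![x, y; z, t] * !![(ϖ ^ i)⁻¹, 0; 0, 1]) = a ^ (-(i : ℤ))) := by
  have hq0 : (0 : ℝ) < q := by positivity
  have hϖ0 : ϖ ≠ 0 := by
    rintro rfl
    exact hq0.ne (by simpa using hvϖ)
  let φ : F → ℂ := fun s => μ s * (Real.sqrt (v s) : ℂ)
  have hφ (w : F) (hw : UnitO O w) (n : ℤ) : φ (w * ϖ ^ n) = a ^ n :=
    ha ▸ mul_sqrt_abv_unit_mul_zpow hq0 hvϖ hvu hμ hμu hϖ0 hw n
  refine ⟨fun hz => ?_, fun m _ hmi ⟨u, hu, hzu⟩ _ => ?_, fun ⟨r, hr, hzr⟩ ht => ?_⟩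
  · obtain ⟨w, hw, hfw⟩ := exists_unit_apply_mul_diag_eq_of_lower_left_eq_pow_mul_unit (φ := φ)
      hf hϖ hϖ0 hk (Nat.zero_le i) hz (by simp)
    rw [hfw, hφ w hw]
    simp
  · obtain ⟨w, hw, hfw⟩ := exists_unit_apply_mul_diag_eq_of_lower_left_eq_pow_mul_unit (φ := φ)
      hf hϖ hϖ0 hk (by omega : m ≤ i) hu hzu
    rw [hfw, hφ w hw]
  · obtain ⟨w, hw, hfw⟩ := exists_unit_apply_mul_diag_eq_of_pow_dvd_lower_left (φ := φ)
      hf hϖ0 hk ht hr hzr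
    rw [hfw, hφ w hw]

/-- values of the translated spherical vector `f(kγ⁻ⁱ)` for
`k = (x y; z t) ∈ GL₂(O_F)`:
`aⁱ` if `val(z/t) ≤ 0` (i.e. `z` is a unit); `a^(i−2m)` if `val(z/t) = m` with
`1 ≤ m ≤ i−1` (i.e. `z = ϖᵐ·unit` and `t` a unit); `a^(−i)` if `val(z/t) ≥ i`
(i.e. `ϖⁱ ∣ z` and `t` a unit). Here `a = μ(ϖ)/√q`. -/
theorem statement8 {F : Type*} [Field F] (O : ValuationSubring F) (ϖ : F) (hϖ : ϖ ∈ O)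
    (hirr : Irreducible (⟨ϖ, hϖ⟩ : O)) (q : ℕ) (hq : 1 < q)
    (v : AbsoluteValue F ℝ) (hvϖ : v ϖ = 1 / q) (hvu : ∀ x : F, UnitO O x → v x = 1)
    (μ : F → ℂ) (hμ1 : μ 1 = 1)
    (hμ : ∀ x y : F, x ≠ 0 → y ≠ 0 → μ (x * y) = μ x * μ y)
    (hμu : ∀ x : F, UnitO O x → μ x = 1)
    (f : Matrix (Fin 2) (Fin 2) F → ℂ)
    (hf : ∀ b ∈ Bset F, ∀ k ∈ Kset O,
      f (b * k) = μ (b 0 0 / b 1 1) * (Real.sqrt (v (b 0 0 / b 1 1)) : ℂ))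
    (a : ℂ) (ha : a = μ ϖ / (Real.sqrt q : ℂ))
    (x y z t : F) (hk : !![x, y; z, t] ∈ Kset O) (i : ℕ) :
    (UnitO O z → f (!![x, y; z, t] * !![(ϖ ^ i)⁻¹, 0; 0, 1]) = a ^ i) ∧
    (∀ m : ℕ, 1 ≤ m → m ≤ i - 1 → (∃ u : F, UnitO O u ∧ z = ϖ ^ m * u) → UnitO O t →
      f (!![x, y; z, t] * !![(ϖ ^ i)⁻¹, 0; 0, 1]) = a ^ ((i : ℤ) - 2 * m)) ∧
    ((∃ r ∈ O, z = ϖ ^ i * r) → UnitO O t →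
      f (!![x, y; z, t] * !![(ϖ ^ i)⁻¹, 0; 0, 1]) = a ^ (-(i : ℤ))) :=
  statement8_general O ϖ hϖ q hq v hvϖ hvu μ hμ hμu f hf a ha x y z t hk i
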